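/- For λ > 0, τ > 0 and r ∈ ℝ, the integral ∫_{0}^{∞} λ·exp(-λx) · exp(-(x - r)²/(2τ)) dx equals λ·√(πτ/2) · erfcx( -(r - λτ)/√(2τ) ) · exp(-r²/(2τ)), where erfcx(t) = exp(t²)·erfc(t) is the scaled complementary error function. -/

import Mathlib

/-! Completing the square turns the integrand into a constant times a Gaussian in `x` centred at
`r - λτ`; its integral over `(0, ∞)` is a Gaussian tail, i.e. an `erfc` value, and the constant
`exp (λ²τ/2 - λr)` splits as `exp (t²) · exp (-r²/(2τ))` with `t` the `erfc` argument. -/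

open MeasureTheory Set

/-- The complementary error function `erfc t = (2/√π) ∫_t^∞ exp(-s²) ds`. -/
noncomputable def erfc (t : ℝ) : ℝ :=
  (2 / Real.sqrt Real.pi) * ∫ s in Set.Ioi t, Real.exp (-s ^ 2)

/-- The scaled complementary error function `erfcx t = exp(t²)·erfc t`. -/
noncomputable def erfcx (t : ℝ) : ℝ := Real.exp (t ^ 2) * erfc t

section IoiChangeVariables

variable {E : Type*} [NormedAddCommGroup E] [NormedSpace ℝ E]

theorem integral_comp_add_right_Ioi (g : ℝ → E) (a c : ℝ) :
    ∫ x in Ioi a, g (x + c) = ∫ x in Ioi (a + c), g x := by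
  have h := (measurePreserving_add_right volume c).setIntegral_preimage_emb
    (measurableEmbedding_addRight c) g (Ioi (a + c))
  rwa [preimage_add_const_Ioi, add_sub_cancel_right] at h

theorem integral_comp_sub_div_Ioi (g : ℝ → E) (a m : ℝ) {σ : ℝ} (hσ : 0 < σ) :
    ∫ x in Ioi a, g ((x - m) / σ) = σ • ∫ s in Ioi ((a - m) / σ), g s := by
  calc ∫ x in Ioi a, g ((x - m) / σ)
      = ∫ y in Ioi (a - m), g (y * σ⁻¹) := by
        simpa [sub_eq_add_neg, div_eq_mul_inv] using
          integral_comp_add_right_Ioi (fun y => g (y * σ⁻¹)) a (-m)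
    _ = σ • ∫ s in Ioi ((a - m) / σ), g s := by
        rw [integral_comp_mul_right_Ioi g _ (inv_pos.mpr hσ), inv_inv, div_eq_mul_inv]

end IoiChangeVariables

theorem integral_Ioi_exp_neg_sq (t : ℝ) :
    ∫ s in Ioi t, Real.exp (-s ^ 2) = Real.sqrt Real.pi / 2 * erfc t := by
  have hπ : Real.sqrt Real.pi ≠ 0 := (Real.sqrt_pos.mpr Real.pi_pos).ne'
  rw [erfc]
  field_simp

theorem integral_Ioi_gaussian_eq_erfc (a m : ℝ) {τ : ℝ} (hτ : 0 < τ) :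
    ∫ x in Ioi a, Real.exp (-(x - m) ^ 2 / (2 * τ)) =
      Real.sqrt (Real.pi * τ / 2) * erfc ((a - m) / Real.sqrt (2 * τ)) := by
  have h2τ : 0 < 2 * τ := by positivity
  have hσ : 0 < Real.sqrt (2 * τ) := Real.sqrt_pos.mpr h2τ
  have hσsq : Real.sqrt (2 * τ) ^ 2 = 2 * τ := Real.sq_sqrt h2τ.le
  have hintegrand : ∀ x : ℝ, Real.exp (-(x - m) ^ 2 / (2 * τ)) =
      Real.exp (-((x - m) / Real.sqrt (2 * τ)) ^ 2) := by
    intro x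
    rw [div_pow, hσsq, neg_div]
  have hconst : Real.sqrt (Real.pi * τ / 2) = Real.sqrt (2 * τ) * (Real.sqrt Real.pi / 2) := by
    rw [← mul_div_assoc, ← Real.sqrt_mul h2τ.le,
      show 2 * τ * Real.pi = 2 ^ 2 * (Real.pi * τ / 2) by ring,
      Real.sqrt_mul (by positivity), Real.sqrt_sq zero_le_two]
    ring
  simp only [hintegrand]
  rw [integral_comp_sub_div_Ioi (fun s => Real.exp (-s ^ 2)) a m hσ, smul_eq_mul,
    integral_Ioi_exp_neg_sq, hconst, mul_assoc]

theorem exp_neg_mul_mul_exp_gaussian (c r x : ℝ) {τ : ℝ} (hτ : τ ≠ 0) :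
    Real.exp (-c * x) * Real.exp (-(x - r) ^ 2 / (2 * τ)) =
      Real.exp (c ^ 2 * τ / 2 - c * r) * Real.exp (-(x - (r - c * τ)) ^ 2 / (2 * τ)) := by
  rw [← Real.exp_add, ← Real.exp_add]
  congr 1
  field_simp
  ring

theorem exponential_gaussian_integral_general
    (lam tau r : ℝ) (htau : 0 < tau) :
    ∫ x in Set.Ioi (0 : ℝ),
        lam * Real.exp (-lam * x) * Real.exp (-(x - r) ^ 2 / (2 * tau)) =
      lam * Real.sqrt (Real.pi * tau / 2) *
        erfcx (-(r - lam * tau) / Real.sqrt (2 * tau)) * Real.exp (-r ^ 2 / (2 * tau)) := by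
  have hsplit : Real.exp (lam ^ 2 * tau / 2 - lam * r) =
      Real.exp ((-(r - lam * tau) / Real.sqrt (2 * tau)) ^ 2) * Real.exp (-r ^ 2 / (2 * tau)) := by
    rw [← Real.exp_add, div_pow, Real.sq_sqrt (by positivity)]
    congr 1
    field_simp
    ring
  simp only [mul_assoc, exp_neg_mul_mul_exp_gaussian lam r _ htau.ne']
  rw [integral_const_mul, integral_const_mul, integral_Ioi_gaussian_eq_erfc 0 _ htau, zero_sub,
    erfcx, hsplit]
  ring

/-- Exponential–Gaussian integral for the Bernoulli-Exponential mixture channel. -/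
theorem exponential_gaussian_integral
    (lam tau r : ℝ) (hlam : 0 < lam) (htau : 0 < tau) :
    ∫ x in Set.Ioi (0 : ℝ),
        lam * Real.exp (-lam * x) * Real.exp (-(x - r) ^ 2 / (2 * tau)) =
      lam * Real.sqrt (Real.pi * tau / 2) *
        erfcx (-(r - lam * tau) / Real.sqrt (2 * tau)) * Real.exp (-r ^ 2 / (2 * tau)) :=
  exponential_gaussian_integral_general lam tau r htau
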